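/- Fix C ∈ Config_{n,m} and let U = {C′ ∈ Config_{n,m} : C′ ∼ C} be its similarity class. Then the restriction A_φ : U → U is injective if and only if C contains a red cell. -/

import Mathlib

/-!
Cellular automata on bounded configurations (Durand / Kapytka setup).

A cell state has components (coord, flag, a, pd, pc, label), each possibly the
undefined value `□` (modelled by `Option`).  Configurations are maps
`ℤ × ℤ → CellState` that are quiescent exactly outside the rectangle
`[n+1] × [m+2]`.  A CNF formula `φ` is given by its clause–literal incidence:
`φ i j = some true` iff `x_j ∈ C_i`, `some false` iff `¬x_j ∈ C_i`,
`none` iff neither occurs.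
-/

namespace CA

structure CellState where
  coord : Option ℤ × Option ℤ
  flag  : Option ℤ
  aval  : Option Bool
  pd    : Option Bool
  pc    : Option Bool
  label : Option Bool
  deriving DecidableEq

/-- The quiescent state `q`: all components are `□`. -/
def qState : CellState := ⟨(none, none), none, none, none, none, none⟩

abbrev Cfg := ℤ × ℤ → CellState

/-- Clause–literal incidence of a CNF formula. -/
abbrev CNF := ℤ → ℤ → Option Bool

/-- The position `p` lies inside the rectangle `[n+1] × [m+2]`. -/
def inside (n m : ℕ) (p : ℤ × ℤ) : Prop :=
  0 ≤ p.1 ∧ p.1 ≤ (n : ℤ) ∧ 0 ≤ p.2 ∧ p.2 ≤ (m : ℤ) + 1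

def rightN (p : ℤ × ℤ) : ℤ × ℤ := (p.1, p.2 + 1)
def leftN  (p : ℤ × ℤ) : ℤ × ℤ := (p.1, p.2 - 1)
def belowN (p : ℤ × ℤ) : ℤ × ℤ := (p.1 + 1, p.2)
def aboveN (p : ℤ × ℤ) : ℤ × ℤ := (p.1 - 1, p.2)

/-- `q` is a von Neumann neighbour of `p`. -/
def vnNbr (p q : ℤ × ℤ) : Prop :=
  q = rightN p ∨ q = leftN p ∨ q = belowN p ∨ q = aboveN p

/-- The state set `S_{n,m}`: the seven classes (S1)–(S7). -/
def ValidState (n m : ℕ) (s : CellState) : Prop :=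
  (∃ l : Bool, s = ⟨(some 0, some 0), none, none, none, none, some l⟩) ∨
  (∃ (i : ℤ) (l : Bool), 1 ≤ i ∧ i ≤ (n : ℤ) ∧
      s = ⟨(some i, some 0), none, none, none, none, some l⟩) ∨
  (∃ (j : ℤ) (a l : Bool), 1 ≤ j ∧ j ≤ (m : ℤ) ∧
      s = ⟨(some 0, some j), none, some a, none, none, some l⟩) ∨
  (∃ l : Bool, s = ⟨(some 0, some ((m : ℤ) + 1)), none, none, none, none, some l⟩) ∨
  (∃ (i : ℤ) (pc l : Bool), 1 ≤ i ∧ i ≤ (n : ℤ) ∧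
      s = ⟨(some i, some ((m : ℤ) + 1)), none, none, none, some pc, some l⟩) ∨
  (∃ (i j fl : ℤ) (a pd l : Bool), 1 ≤ i ∧ i ≤ (n : ℤ) ∧ 1 ≤ j ∧ j ≤ (m : ℤ) ∧
      (fl = -1 ∨ fl = 0 ∨ fl = 1) ∧
      s = ⟨(some i, some j), some fl, some a, some pd, none, some l⟩) ∨
  s = qState

/-- `C ∈ Config_{n,m}`. -/
def IsConfig (n m : ℕ) (C : Cfg) : Prop :=
  (∀ p, ValidState n m (C p)) ∧
  (∀ p, inside n m p → C p ≠ qState) ∧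
  (∀ p, ¬ inside n m p → C p = qState)

/-- The literal of clause `C_i` on variable `x_j` is satisfied by `a`. -/
def litSat (φ : CNF) (a : ℤ → Bool) (i j : ℤ) : Prop :=
  (φ i j = some true ∧ a j = true) ∨ (φ i j = some false ∧ a j = false)

/-- Clause `C_i` is satisfied by the assignment `a`. -/
def clauseSat (φ : CNF) (a : ℤ → Bool) (m : ℕ) (i : ℤ) : Prop :=
  ∃ j : ℤ, 1 ≤ j ∧ j ≤ (m : ℤ) ∧ litSat φ a i j

/-- The CNF formula `φ` (with `n` clauses, `m` variables) is satisfiable. -/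
def Satisfiable (φ : CNF) (n m : ℕ) : Prop :=
  ∃ a : ℤ → Bool, ∀ i : ℤ, 1 ≤ i → i ≤ (n : ℤ) → clauseSat φ a m i

/-- The cell at position `q` behaves correctly for theoretical index `idx`:
if `idx` is inside the rectangle its written coordinates are `idx`,
otherwise the cell is quiescent. -/
def nbrCoordOK (n m : ℕ) (C : Cfg) (q idx : ℤ × ℤ) : Prop :=
  (inside n m idx → (C q).coord = (some idx.1, some idx.2)) ∧
  (¬ inside n m idx → C q = qState)

/-- (A) Index consistency. -/
def ruleA (n m : ℕ) (C : Cfg) (p : ℤ × ℤ) : Prop :=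
  ∀ i j : ℤ, 0 ≤ i → i ≤ (n : ℤ) → 0 ≤ j → j ≤ (m : ℤ) + 1 →
    ((C p).coord = (some i, some j) ↔
      (nbrCoordOK n m C (rightN p) (i, j + 1) ∧
       nbrCoordOK n m C (leftN p) (i, j - 1) ∧
       nbrCoordOK n m C (belowN p) (i + 1, j) ∧
       nbrCoordOK n m C (aboveN p) (i - 1, j)))

/-- (B) Formula consistency. -/
def ruleB (φ : CNF) (n m : ℕ) (C : Cfg) (p : ℤ × ℤ) : Prop :=
  ∀ i j : ℤ, (C p).coord = (some i, some j) →
    1 ≤ i → i ≤ (n : ℤ) → 1 ≤ j → j ≤ (m : ℤ) →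
      (((C p).flag = some 1 ↔ φ i j = some true) ∧
       ((C p).flag = some (-1) ↔ φ i j = some false) ∧
       ((C p).flag = some 0 ↔ φ i j = none))

/-- (C1) the `a`-value is constant along columns `1 ≤ j ≤ m`. -/
def ruleC1 (n m : ℕ) (C : Cfg) (p : ℤ × ℤ) : Prop :=
  ∀ i j : ℤ, (C p).coord = (some i, some j) → 1 ≤ j → j ≤ (m : ℤ) →
    ((inside n m (aboveN p) → (C (aboveN p)).aval = (C p).aval) ∧
     (inside n m (belowN p) → (C (belowN p)).aval = (C p).aval))

/-- (C2) partial conjunction recurrence for rows `r ≥ 2`. -/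
def ruleC2 (n m : ℕ) (C : Cfg) (p : ℤ × ℤ) : Prop :=
  ∀ r : ℤ, (C p).coord = (some r, some ((m : ℤ) + 1)) → 2 ≤ r →
    ((C p).pc = some true ↔
      ((C (aboveN p)).pc = some true ∧ (C (leftN p)).pd = some true))

/-- (C3) partial conjunction base case. -/
def ruleC3 (n m : ℕ) (C : Cfg) (p : ℤ × ℤ) : Prop :=
  (C p).coord = (some 1, some ((m : ℤ) + 1)) →
    ((C p).pc = some true ↔ (C (leftN p)).pd = some true)

/-- The literal written in the cell is satisfied:
`flag(s) = 1 ∧ a(s) = 1` or `flag(s) = −1 ∧ a(s) = 0`. -/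
def litHolds (C : Cfg) (p : ℤ × ℤ) : Prop :=
  ((C p).flag = some 1 ∧ (C p).aval = some true) ∨
  ((C p).flag = some (-1) ∧ (C p).aval = some false)

/-- (D1) partial disjunction recurrence for columns `2 ≤ j ≤ m`. -/
def ruleD1 (n m : ℕ) (C : Cfg) (p : ℤ × ℤ) : Prop :=
  ∀ i j : ℤ, (C p).coord = (some i, some j) →
    1 ≤ i → i ≤ (n : ℤ) → 2 ≤ j → j ≤ (m : ℤ) →
      ((C p).pd = some true ↔ ((C (leftN p)).pd = some true ∨ litHolds C p))

/-- (D2) partial disjunction base case. -/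
def ruleD2 (n m : ℕ) (C : Cfg) (p : ℤ × ℤ) : Prop :=
  ∀ i : ℤ, (C p).coord = (some i, some 1) → 1 ≤ i → i ≤ (n : ℤ) →
    ((C p).pd = some true ↔ litHolds C p)

/-- (E) Technical conditions (E1)–(E4). -/
def ruleE (n m : ℕ) (C : Cfg) (p : ℤ × ℤ) : Prop :=
  ∀ i j : ℤ, (C p).coord = (some i, some j) →
    (((j = 0 ∨ (i = 0 ∧ j = 0) ∨ (i = 0 ∧ j = (m : ℤ) + 1)) →
        (C p).flag = none ∧ (C p).aval = none ∧ (C p).pd = none ∧ (C p).pc = none) ∧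
     ((i = 0 ∧ 1 ≤ j ∧ j ≤ (m : ℤ)) →
        (C p).flag = none ∧ (C p).pd = none ∧ (C p).pc = none) ∧
     ((j = (m : ℤ) + 1 ∧ 1 ≤ i) →
        (C p).flag = none ∧ (C p).aval = none ∧ (C p).pd = none) ∧
     ((1 ≤ i ∧ i ≤ (n : ℤ) ∧ 1 ≤ j ∧ j ≤ (m : ℤ)) → (C p).pc = none))

/-- The cell of `C` at `p` is locally correct: rules (A)–(E). -/
def LocallyCorrect (φ : CNF) (n m : ℕ) (C : Cfg) (p : ℤ × ℤ) : Prop :=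
  ruleA n m C p ∧ ruleB φ n m C p ∧ ruleC1 n m C p ∧ ruleC2 n m C p ∧
  ruleC3 n m C p ∧ ruleD1 n m C p ∧ ruleD2 n m C p ∧ ruleE n m C p

/-- The (non-quiescent) cell of `C` at `p` is blue: it is locally correct and,
if it is an output cell, its `pc` component is `1`.  A cell is red iff it is
not blue. -/
def Blue (φ : CNF) (n m : ℕ) (C : Cfg) (p : ℤ × ℤ) : Prop :=
  C p ≠ qState ∧ LocallyCorrect φ n m C p ∧
  ((C p).coord = (some (n : ℤ), some ((m : ℤ) + 1)) → (C p).pc = some true)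

open scoped Classical in
/-- The snake-like successor map on indices of the rectangle `[n+1] × [m+2]`. -/
noncomputable def suc (n m : ℕ) (p : ℤ × ℤ) : ℤ × ℤ :=
  if p = (0, 0) ∨ (Even p.1 ∧ 1 ≤ p.2 ∧ p.2 ≤ (m : ℤ)) then (p.1, p.2 + 1)
  else if p = ((n : ℤ), 1) ∨ (Odd p.1 ∧ 2 ≤ p.2 ∧ p.2 ≤ (m : ℤ) + 1) then (p.1, p.2 - 1)
  else if (Odd p.1 ∧ p.2 = 1 ∧ p.1 ≠ (n : ℤ)) ∨ (Even p.1 ∧ p.2 = (m : ℤ) + 1) then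
    (p.1 + 1, p.2)
  else (p.1 - 1, p.2)

/-- `q` is the successor cell of `p` in `C`: a von Neumann neighbour whose
written coordinates are `suc` of the written coordinates of `p`. -/
def IsSucc (n m : ℕ) (C : Cfg) (p q : ℤ × ℤ) : Prop :=
  vnNbr p q ∧ ∃ i j : ℤ, (C p).coord = (some i, some j) ∧
    (C q).coord = (some (suc n m (i, j)).1, some (suc n m (i, j)).2)

/-- The position of the successor cell of `p` (the geometric neighbour of `p`
in the direction from the written coordinates of `p` to their `suc`). -/
noncomputable def succPos (n m : ℕ) (C : Cfg) (p : ℤ × ℤ) : ℤ × ℤ :=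
  match (C p).coord with
  | (some i, some j) => (p.1 + ((suc n m (i, j)).1 - i), p.2 + ((suc n m (i, j)).2 - j))
  | _ => p

open scoped Classical in
/-- The global map of the cellular automaton `A_φ`: a blue cell replaces its
label by `label(s₁) XOR label(s_k)` where `s_k` is the state of its successor
cell; a red cell is unchanged. -/
noncomputable def step (φ : CNF) (n m : ℕ) (C : Cfg) : Cfg := fun p =>
  if Blue φ n m C p then
    { C p with label := Option.map₂ Bool.xor ((C p).label) ((C (succPos n m C p)).label) }
  else C p

/-- `C ∼ C'`: the configurations agree on all state components except
possibly the labels. -/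
def Similar (C C' : Cfg) : Prop :=
  ∀ p, (C p).coord = (C' p).coord ∧ (C p).flag = (C' p).flag ∧
    (C p).aval = (C' p).aval ∧ (C p).pd = (C' p).pd ∧ (C p).pc = (C' p).pc

/-- Encoding of clause–literal occurrence as flag value in `{−1, 0, 1}`. -/
def flagInt (o : Option Bool) : ℤ :=
  match o with
  | some true => 1
  | some false => -1
  | none => 0

/-- Truth value under `a` of the disjunction of the literals of `C_i`
among the variables `x₁, …, x_j`. -/
noncomputable def pdVal (φ : CNF) (a : ℤ → Bool) (i j : ℤ) : Bool :=
  @decide (∃ u : ℤ, 1 ≤ u ∧ u ≤ j ∧ litSat φ a i u) (Classical.propDecidable _)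

/-- Truth value under `a` of the partial conjunction `C₁ ∧ … ∧ C_i`. -/
noncomputable def pcVal (φ : CNF) (a : ℤ → Bool) (m : ℕ) (i : ℤ) : Bool :=
  @decide (∀ v : ℤ, 1 ≤ v → v ≤ i → clauseSat φ a m v) (Classical.propDecidable _)

open scoped Classical in
/-- The computation table `Table_φ(a)`, with all labels `0`. -/
noncomputable def Table (φ : CNF) (n m : ℕ) (a : ℤ → Bool) : Cfg := fun p =>
  if inside n m p then
    { coord := (some p.1, some p.2)
      flag := if 1 ≤ p.1 ∧ p.1 ≤ (n : ℤ) ∧ 1 ≤ p.2 ∧ p.2 ≤ (m : ℤ) then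
          some (flagInt (φ p.1 p.2)) else none
      aval := if 1 ≤ p.2 ∧ p.2 ≤ (m : ℤ) then some (a p.2) else none
      pd := if 1 ≤ p.1 ∧ p.1 ≤ (n : ℤ) ∧ 1 ≤ p.2 ∧ p.2 ≤ (m : ℤ) then
          some (pdVal φ a p.1 p.2) else none
      pc := if 1 ≤ p.1 ∧ p.1 ≤ (n : ℤ) ∧ p.2 = (m : ℤ) + 1 then
          some (pcVal φ a m p.1) else none
      label := some false }
  else qState

end CA


/-!
If every cell of `C` is blue, flipping all labels yields a similar configuration with the same
image, since `A_φ` only replaces a label by the xor of two labels. Conversely, if two similar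
configurations with the same image disagree at some cell, that cell is blue and they also
disagree at its successor. The written coordinates of the successive cells then follow the snake
`suc`, which enumerates the `(n + 1)(m + 2)` cells of the rectangle cyclically (this needs `n`
odd), so the disagreement runs through distinct cells, exhausts the rectangle, and every cell of
`C` is blue.
-/

namespace CA

variable {n m : ℕ}

lemma ValidState.exists_coord {s : CellState} (h : ValidState n m s) (hq : s ≠ qState) :
    ∃ c : ℤ × ℤ, ∃ l : Bool,
      s.coord = (some c.1, some c.2) ∧ s.label = some l ∧ inside n m c := by
  rcases h with ⟨l, rfl⟩ | ⟨i, l, h1, h2, rfl⟩ | ⟨j, a, l, h1, h2, rfl⟩ | ⟨l, rfl⟩ |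
    ⟨i, pc, l, h1, h2, rfl⟩ | ⟨i, j, fl, a, pd, l, h1, h2, h3, h4, -, rfl⟩ | rfl
  · exact ⟨(0, 0), l, rfl, rfl, by simp only [inside]; omega⟩
  · exact ⟨(i, 0), l, rfl, rfl, by simp only [inside]; omega⟩
  · exact ⟨(0, j), l, rfl, rfl, by simp only [inside]; omega⟩
  · exact ⟨(0, m + 1), l, rfl, rfl, by simp only [inside]; omega⟩
  · exact ⟨(i, m + 1), l, rfl, rfl, by simp only [inside]; omega⟩
  · exact ⟨(i, j), l, rfl, rfl, by simp only [inside]; omega⟩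
  · exact absurd rfl hq

lemma IsConfig.exists_coord {C : Cfg} (hC : IsConfig n m C) {p : ℤ × ℤ} (hp : inside n m p) :
    ∃ c : ℤ × ℤ, ∃ l : Bool,
      (C p).coord = (some c.1, some c.2) ∧ (C p).label = some l ∧ inside n m c :=
  (hC.1 p).exists_coord (hC.2.1 p hp)

lemma IsConfig.eq_qState_iff {C : Cfg} (hC : IsConfig n m C) {p : ℤ × ℤ} :
    C p = qState ↔ ¬ inside n m p :=
  ⟨fun hq hp => hC.2.1 p hp hq, hC.2.2 p⟩

lemma Similar.refl (C : Cfg) : Similar C C := fun _ => ⟨rfl, rfl, rfl, rfl, rfl⟩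

lemma Similar.symm {C C' : Cfg} (h : Similar C C') : Similar C' C := fun p =>
  let ⟨h1, h2, h3, h4, h5⟩ := h p
  ⟨h1.symm, h2.symm, h3.symm, h4.symm, h5.symm⟩

lemma Similar.trans {C C' C'' : Cfg} (h : Similar C C') (h' : Similar C' C'') :
    Similar C C'' := fun p =>
  let ⟨h1, h2, h3, h4, h5⟩ := h p
  let ⟨h1', h2', h3', h4', h5'⟩ := h' p
  ⟨h1.trans h1', h2.trans h2', h3.trans h3', h4.trans h4', h5.trans h5'⟩

lemma Similar.eq_of_label_eq {C C' : Cfg} (h : Similar C C')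
    (hl : ∀ p, (C p).label = (C' p).label) : C = C' := by
  funext p
  obtain ⟨h1, h2, h3, h4, h5⟩ := h p
  have h6 := hl p
  generalize C p = s, C' p = s' at *
  cases s; cases s'
  simp_all

lemma Similar.succPos_eq {C C' : Cfg} (h : Similar C C') (p : ℤ × ℤ) :
    succPos n m C p = succPos n m C' p := by
  simp only [succPos, (h p).1]

lemma Similar.blue_iff {φ : CNF} {C C' : Cfg} (h : Similar C C') (hC : IsConfig n m C)
    (hC' : IsConfig n m C') (p : ℤ × ℤ) : Blue φ n m C p ↔ Blue φ n m C' p := by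
  have hq : ∀ q, C q = qState ↔ C' q = qState := fun q => by
    rw [hC.eq_qState_iff, hC'.eq_qState_iff]
  simp only [Blue, LocallyCorrect, ruleA, ruleB, ruleC1, ruleC2, ruleC3, ruleD1, ruleD2, ruleE,
    nbrCoordOK, litHolds, ne_eq, hq, fun q => (h q).1, fun q => (h q).2.1,
    fun q => (h q).2.2.1, fun q => (h q).2.2.2.1, fun q => (h q).2.2.2.2]

lemma suc_mem_nbrs (n m : ℕ) (c : ℤ × ℤ) :
    suc n m c = rightN c ∨ suc n m c = leftN c ∨ suc n m c = belowN c ∨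
      suc n m c = aboveN c := by
  unfold suc; split_ifs <;> simp [rightN, leftN, belowN, aboveN]

lemma suc_inside (hn : Odd n) {c : ℤ × ℤ} (h : inside n m c) :
    inside n m (suc n m c) := by
  have hn' : (n : ℤ) % 2 = 1 := Int.odd_iff.mp (by exact_mod_cast hn)
  unfold suc inside at *
  split_ifs <;>
    simp only [Int.even_iff, Int.odd_iff, Prod.ext_iff, not_or, not_and] at * <;> omega

lemma suc_one_zero (n m : ℕ) : suc n m (1, 0) = (0, 0) := by
  norm_num [suc]

/-- The position of a cell along the snake cycle `(0,0) → (0,1) → ⋯ → (1,0) → (0,0)`. -/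
def snakeIdx (n m : ℕ) (c : ℤ × ℤ) : ℤ :=
  if c.2 = 0 then (if c.1 = 0 then 0 else (n + 1) * (m + 1) + (n + 1 - c.1))
  else if Even c.1 then c.1 * (m + 1) + c.2 else c.1 * (m + 1) + (m + 2 - c.2)

lemma snakeIdx_suc (hn : Odd n) {c : ℤ × ℤ} (h : inside n m c) (hc : c ≠ (1, 0)) :
    snakeIdx n m (suc n m c) = snakeIdx n m c + 1 := by
  have hn' : (n : ℤ) % 2 = 1 := Int.odd_iff.mp (by exact_mod_cast hn)
  obtain ⟨i, j⟩ := c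
  unfold suc snakeIdx inside at *
  split_ifs <;>
    simp only [Int.even_iff, Int.odd_iff, Prod.ext_iff, ne_eq, not_or, not_and] at * <;>
    casesm* _ ∨ _, _ ∧ _ <;> (try subst_vars) <;> first | omega | ring

lemma snakeIdx_suc_modEq (hn : Odd n) {c : ℤ × ℤ} (h : inside n m c) :
    snakeIdx n m (suc n m c) ≡ snakeIdx n m c + 1 [ZMOD (n + 1) * (m + 2)] := by
  by_cases hc : c = (1, 0)
  · subst hc
    rw [suc_one_zero]
    refine (Int.modEq_zero_iff_dvd.mpr ⟨1, ?_⟩).symm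
    simp only [snakeIdx, ↓reduceIte, one_ne_zero, add_sub_cancel_right]
    ring
  · rw [snakeIdx_suc hn h hc]

lemma inside_iterate_suc (hn : Odd n) {c : ℤ × ℤ} (h : inside n m c) (t : ℕ) :
    inside n m ((suc n m)^[t] c) := by
  induction t with
  | zero => exact h
  | succ t ih => rw [Function.iterate_succ_apply']; exact suc_inside hn ih

lemma snakeIdx_iterate_suc_modEq (hn : Odd n) {c : ℤ × ℤ} (h : inside n m c)
    (t : ℕ) : snakeIdx n m ((suc n m)^[t] c) ≡ snakeIdx n m c + t [ZMOD (n + 1) * (m + 2)] := by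
  induction t with
  | zero => simp [Int.ModEq.refl]
  | succ t ih =>
    rw [Function.iterate_succ_apply']
    push_cast
    rw [← add_assoc]
    exact (snakeIdx_suc_modEq hn (inside_iterate_suc hn h t)).trans (ih.add_right 1)

lemma iterate_suc_injOn (hn : Odd n) {c : ℤ × ℤ} (h : inside n m c) :
    Set.InjOn (fun t => (suc n m)^[t] c) (Set.Iio ((n + 1) * (m + 2))) := by
  intro a ha b hb hab
  have hmod := ((snakeIdx_iterate_suc_modEq hn h a).symm.trans
    ((congrArg (snakeIdx n m) hab).symm ▸ snakeIdx_iterate_suc_modEq hn h b))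
  have : (a : ℤ) ≡ b [ZMOD ((n + 1) * (m + 2) : ℕ)] := by
    push_cast; exact hmod.add_left_cancel' _
  exact (Int.natCast_modEq_iff.mp this).eq_of_lt_of_lt ha hb

noncomputable def rect (n m : ℕ) : Finset (ℤ × ℤ) :=
  Finset.Icc 0 (n : ℤ) ×ˢ Finset.Icc 0 ((m : ℤ) + 1)

lemma mem_rect {p : ℤ × ℤ} : p ∈ rect n m ↔ inside n m p := by
  simp only [rect, Finset.mem_product, Finset.mem_Icc, inside, and_assoc]

lemma card_rect (n m : ℕ) : (rect n m).card = (n + 1) * (m + 2) := by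
  rw [rect, Finset.card_product, Int.card_Icc, Int.card_Icc, sub_zero, sub_zero,
    Int.toNat_natCast_add_one]
  rfl

lemma Blue.succPos_spec {φ : CNF} {C : Cfg} (hC : IsConfig n m C) (hn : Odd n)
    {p c : ℤ × ℤ} (hB : Blue φ n m C p) (hco : (C p).coord = (some c.1, some c.2))
    (hc : inside n m c) :
    inside n m (succPos n m C p) ∧
      (C (succPos n m C p)).coord = (some (suc n m c).1, some (suc n m c).2) := by
  obtain ⟨hR, hL, hD, hU⟩ := (hB.2.1.1 c.1 c.2 hc.1 hc.2.1 hc.2.2.1 hc.2.2.2).mp hco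
  have hsuc := suc_inside hn hc
  have hpos : succPos n m C p =
      (p.1 + ((suc n m c).1 - c.1), p.2 + ((suc n m c).2 - c.2)) := by
    simp only [succPos, hco]
  have hcoord : (C (succPos n m C p)).coord = (some (suc n m c).1, some (suc n m c).2) := by
    rcases suc_mem_nbrs n m c with h | h | h | h <;> rw [hpos, h] <;> rw [h] at hsuc
    · simpa [rightN] using hR.1 hsuc
    · simpa [leftN, sub_eq_add_neg] using hL.1 hsuc
    · simpa [belowN] using hD.1 hsuc
    · simpa [aboveN, sub_eq_add_neg] using hU.1 hsuc
  refine ⟨by_contra fun hout => ?_, hcoord⟩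
  simp [hC.2.2 _ hout, qState] at hcoord

lemma blue_and_label_ne_succPos {φ : CNF} {C₁ C₂ : Cfg} (hn : Odd n)
    (hC₁ : IsConfig n m C₁) (hC₂ : IsConfig n m C₂) (hs : Similar C₁ C₂)
    (hstep : step φ n m C₁ = step φ n m C₂) {q : ℤ × ℤ} (hq : inside n m q)
    (hne : (C₁ q).label ≠ (C₂ q).label) :
    Blue φ n m C₁ q ∧ (C₁ (succPos n m C₁ q)).label ≠ (C₂ (succPos n m C₁ q)).label := by
  have hstepq := congrArg CellState.label (congrFun hstep q)
  have hB : Blue φ n m C₁ q := by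
    by_contra hB
    have hB₂ : ¬ Blue φ n m C₂ q := (hs.blue_iff hC₁ hC₂ q).not.mp hB
    simp only [step, if_neg hB, if_neg hB₂] at hstepq
    exact hne hstepq
  refine ⟨hB, fun heq => hne ?_⟩
  obtain ⟨c, l₁, hco, hl₁, hc⟩ := hC₁.exists_coord hq
  obtain ⟨-, l₂, -, hl₂, -⟩ := hC₂.exists_coord hq
  obtain ⟨l, hl⟩ : ∃ l, (C₁ (succPos n m C₁ q)).label = some l := by
    obtain ⟨-, l, -, hl, -⟩ := hC₁.exists_coord (hB.succPos_spec hC₁ hn hco hc).1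
    exact ⟨l, hl⟩
  simp only [step, if_pos hB, if_pos ((hs.blue_iff hC₁ hC₂ q).mp hB), ← hs.succPos_eq, ← heq,
    hl, hl₁, hl₂, Option.map₂_some_some, Option.some_inj, Bool.xor_left_inj] at hstepq
  rw [hl₁, hl₂, hstepq]

lemma label_ne_iterate_succPos {φ : CNF} {C₁ C₂ : Cfg} (hn : Odd n)
    (hC₁ : IsConfig n m C₁) (hC₂ : IsConfig n m C₂) (hs : Similar C₁ C₂)
    (hstep : step φ n m C₁ = step φ n m C₂) {q c : ℤ × ℤ} (hq : inside n m q)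
    (hne : (C₁ q).label ≠ (C₂ q).label) (hco : (C₁ q).coord = (some c.1, some c.2))
    (hc : inside n m c) (t : ℕ) :
    let P := (succPos n m C₁)^[t] q
    inside n m P ∧ (C₁ P).label ≠ (C₂ P).label ∧
      (C₁ P).coord = (some ((suc n m)^[t] c).1, some ((suc n m)^[t] c).2) := by
  induction t with
  | zero => exact ⟨hq, hne, hco⟩
  | succ t ih =>
    obtain ⟨hPin, hPne, hPco⟩ := ih
    obtain ⟨hB, hne'⟩ := blue_and_label_ne_succPos hn hC₁ hC₂ hs hstep hPin hPne
    obtain ⟨hin, hco'⟩ := hB.succPos_spec hC₁ hn hPco (inside_iterate_suc hn hc t)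
    simp only [Function.iterate_succ_apply']
    exact ⟨hin, hne', hco'⟩

theorem eq_of_step_eq_of_not_blue {φ : CNF} {C₁ C₂ : Cfg} (hn : Odd n)
    (hC₁ : IsConfig n m C₁) (hC₂ : IsConfig n m C₂) (hs : Similar C₁ C₂)
    (hstep : step φ n m C₁ = step φ n m C₂) {p₀ : ℤ × ℤ} (hp₀ : inside n m p₀)
    (hred : ¬ Blue φ n m C₁ p₀) : C₁ = C₂ := by
  refine hs.eq_of_label_eq fun q => ?_
  by_cases hq : inside n m q
  swap
  · rw [hC₁.2.2 q hq, hC₂.2.2 q hq]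
  by_contra hne
  obtain ⟨c, -, hco, -, hc⟩ := hC₁.exists_coord hq
  have hchain := label_ne_iterate_succPos hn hC₁ hC₂ hs hstep hq hne hco hc
  obtain ⟨t, ht, rfl⟩ := Finset.surj_on_of_inj_on_of_card_le
    (s := Finset.range ((n + 1) * (m + 2))) (t := rect n m)
    (fun t _ => (succPos n m C₁)^[t] q) (fun t _ => mem_rect.mpr (hchain t).1)
    (fun a b ha hb hab => iterate_suc_injOn hn hc (Finset.mem_range.mp ha)
      (Finset.mem_range.mp hb) (by
        have := (hchain a).2.2.symm.trans (hab ▸ (hchain b).2.2)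
        simp only [Prod.mk.injEq, Option.some.injEq] at this
        exact Prod.ext this.1 this.2))
    (by rw [card_rect, Finset.card_range]) p₀ (mem_rect.mpr hp₀)
  exact hred (blue_and_label_ne_succPos hn hC₁ hC₂ hs hstep (hchain t).1 (hchain t).2.1).1

def flipLabels (C : Cfg) : Cfg := fun p => { C p with label := (C p).label.map not }

lemma similar_flipLabels (C : Cfg) : Similar (flipLabels C) C :=
  fun _ => ⟨rfl, rfl, rfl, rfl, rfl⟩

lemma ValidState.map_label {s : CellState} (h : ValidState n m s) (f : Bool → Bool) :
    ValidState n m { s with label := s.label.map f } := by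
  rcases h with ⟨l, rfl⟩ | ⟨i, l, h1, h2, rfl⟩ | ⟨j, a, l, h1, h2, rfl⟩ | ⟨l, rfl⟩ |
    ⟨i, pc, l, h1, h2, rfl⟩ | ⟨i, j, fl, a, pd, l, h1, h2, h3, h4, h5, rfl⟩ | rfl
  all_goals simp [ValidState, qState, *]

lemma IsConfig.flipLabels {C : Cfg} (hC : IsConfig n m C) : IsConfig n m (flipLabels C) := by
  refine ⟨fun p => (hC.1 p).map_label not, fun p hp hq => hC.2.1 p hp ?_, fun p hp => ?_⟩
  · simp only [CA.flipLabels] at hq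
    generalize C p = s at hq
    cases s
    simp_all [qState]
  · simp [CA.flipLabels, hC.2.2 p hp, qState]

lemma step_flipLabels {φ : CNF} {C : Cfg} (hC : IsConfig n m C)
    (hblue : ∀ p, inside n m p → Blue φ n m C p) : step φ n m (flipLabels C) = step φ n m C := by
  have hC' := hC.flipLabels
  funext p
  by_cases hp : inside n m p
  · have hB := hblue p hp
    simp only [step, if_pos hB, if_pos (((similar_flipLabels C).blue_iff hC' hC p).mpr hB),
      (similar_flipLabels C).succPos_eq, CA.flipLabels]
    congr 1
    cases (C p).label <;> cases (C (succPos n m C p)).label <;> simp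
  · have hB : ¬ Blue φ n m C p := fun h => h.1 (hC.2.2 p hp)
    have hB' : ¬ Blue φ n m (flipLabels C) p := fun h => h.1 (hC'.2.2 p hp)
    simp only [step, if_neg hB, if_neg hB', hC.2.2 p hp, hC'.2.2 p hp]

lemma flipLabels_ne {C : Cfg} (hC : IsConfig n m C) : flipLabels C ≠ C := fun h => by
  obtain ⟨-, l, -, hl, -⟩ := hC.exists_coord (p := (0, 0)) (by simp only [inside]; omega)
  have := congrArg CellState.label (congrFun h (0, 0))
  simp [CA.flipLabels, hl] at this

end CA

open CA in
theorem stmt_1_general (n m : ℕ) (hnodd : Odd n) (φ : CNF)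
    (C : Cfg) (hC : IsConfig n m C) :
    (∀ C₁ C₂ : Cfg, IsConfig n m C₁ → IsConfig n m C₂ →
        Similar C₁ C → Similar C₂ C →
        step φ n m C₁ = step φ n m C₂ → C₁ = C₂) ↔
      (∃ p : ℤ × ℤ, inside n m p ∧ ¬ Blue φ n m C p) := by
  constructor
  · intro hinj
    by_contra! hblue
    exact flipLabels_ne hC (hinj _ _ hC.flipLabels hC (similar_flipLabels C) (CA.Similar.refl C)
      (step_flipLabels hC hblue))
  · rintro ⟨p₀, hp₀, hred⟩ C₁ C₂ hC₁ hC₂ hs₁ hs₂ hstep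
    exact eq_of_step_eq_of_not_blue hnodd hC₁ hC₂ (hs₁.trans hs₂.symm) hstep hp₀
      fun hB => hred ((hs₁.blue_iff hC₁ hC p₀).mp hB)

open CA in
/-- Fix `C ∈ Config_{n,m}` and let `U` be its similarity class.
Then the restriction `A_φ : U → U` is injective iff `C` contains a red cell. -/
theorem stmt_1 (n m : ℕ) (hn : 1 ≤ n) (hnodd : Odd n) (hm : 1 ≤ m) (φ : CNF)
    (C : Cfg) (hC : IsConfig n m C) :
    (∀ C₁ C₂ : Cfg, IsConfig n m C₁ → IsConfig n m C₂ →
        Similar C₁ C → Similar C₂ C →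
        step φ n m C₁ = step φ n m C₂ → C₁ = C₂) ↔
      (∃ p : ℤ × ℤ, inside n m p ∧ ¬ Blue φ n m C p) :=
  stmt_1_general n m hnodd φ C hC
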